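/- In the setting of the non-archimedean Eisenstein series, for $z \in \Omega_\infty^r$, $w \in k_\infty^r \setminus Y$, and $\mathrm{Re}(s) > 1$: $\|Y\|_A^{-s}\big(\mathbb{E}^Y(z,w,s) - \mathbb{E}^Y(z,s)\big) = \frac{\mathrm{im}(z)^s}{\nu_z(w)^{rs}} + \sum_{0\ne\lambda\in Y,\ \nu_z(\lambda)\le\nu_z(w)}\Big(\frac{\mathrm{im}(z)^s}{\nu_z(\lambda-w)^{rs}} - \frac{\mathrm{im}(z)^s}{\nu_z(\lambda)^{rs}}\Big)$, where the right-hand side is a finite sum. Consequently the Jacobi-type Eisenstein series $\mathbb{E}^Y(z,w,s) = \|Y\|_A^s\sum_{\lambda\in Y}\mathrm{im}(z)^s/\nu_z(\lambda-w)^{rs}$ converges absolutely for $\mathrm{Re}(s)>1$, extends meromorphically, and satisfies $\mathbb{E}^Y(z,w,0) = 0$. -/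

import Mathlib

/-- An abstract (non-archimedean, multiplicative) absolute value on a field `F`. -/
structure NAAbs (F : Type*) [Field F] where
  abs : F → ℝ
  nonneg : ∀ a, 0 ≤ abs a
  eq_zero : ∀ a, abs a = 0 ↔ a = 0
  map_mul : ∀ a b, abs (a * b) = abs a * abs b
  ultra : ∀ a b, abs (a + b) ≤ max (abs a) (abs b)

/-- `F` together with `A` is a non-archimedean *local* field with uniformizer `π`:
the value group is discrete with generator `|π| < 1`, the residue field is finite,
and `F` is complete. -/
def NAAbs.IsLocal {F : Type*} [Field F] (A : NAAbs F) (π : F) : Prop :=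
  π ≠ 0 ∧ A.abs π < 1 ∧ (∀ a : F, A.abs a < 1 → A.abs a ≤ A.abs π) ∧
  (∃ S : Finset F, ∀ a : F, A.abs a ≤ 1 → ∃ s ∈ S, A.abs (a - s) < 1) ∧
  (∀ f : ℕ → F, (∀ ε : ℝ, 0 < ε → ∃ N, ∀ m ≥ N, ∀ n ≥ N, A.abs (f m - f n) < ε) →
    ∃ x : F, ∀ ε : ℝ, 0 < ε → ∃ N, ∀ n ≥ N, A.abs (f n - x) < ε)

/-- A non-archimedean norm on an `F`-vector space `V`, relative to the absolute value `A`. -/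
structure NANorm {F : Type*} [Field F] (A : NAAbs F)
    (V : Type*) [AddCommGroup V] [Module F V] where
  nu : V → ℝ
  nonneg : ∀ v, 0 ≤ nu v
  eq_zero : ∀ v, nu v = 0 ↔ v = 0
  smul_eq : ∀ (a : F) (v : V), nu (a • v) = A.abs a * nu v
  ultra : ∀ u v, nu (u + v) ≤ max (nu u) (nu v)

/-- `b` is an `O_F`-basis of the `O_F`-lattice `L ⊆ V`. -/
def IsLatticeBasis {F : Type*} [Field F] (A : NAAbs F)
    {V : Type*} [AddCommGroup V] [Module F V]
    {ι : Type*} [Fintype ι] (b : ι → V) (L : Set V) : Prop :=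
  LinearIndependent F b ∧
  ∀ v : V, v ∈ L ↔ ∃ c : ι → F, (∀ i, A.abs (c i) ≤ 1) ∧ v = ∑ i, c i • b i

/-- `b` is orthogonal with respect to the norm(-like function) `νn`. -/
def IsOrthogonalFor {F : Type*} [Field F] (A : NAAbs F)
    {V : Type*} [AddCommGroup V] [Module F V]
    {ι : Type*} [Fintype ι] (νn : V → ℝ) (b : ι → V) : Prop :=
  ∀ c : ι → F, νn (∑ i, c i • b i) = ⨆ i, νn (c i • b i)

/-!
Because `ν` is ultrametric, `ν (λ - w) = ν λ` as soon as `ν λ > ν w`. Hence the series over `Y`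
with terms `φ (ν (λ - w))` differs from the series over `Y ∖ {0}` with terms `φ (ν λ)` only in the
term `λ = 0`, which is `φ (ν w)`, and on the finite ball `{λ ∈ Y ∖ {0} : ν λ ≤ ν w}`. This gives
both the summability and the difference formula; at `s = 0` every term of the finite sum is
`1 - 1`.
-/

namespace NAAbs

variable {F : Type*} [Field F] (A : NAAbs F)

theorem abs_one : A.abs 1 = 1 := by
  have h := A.map_mul 1 1
  rw [one_mul] at h
  have h0 : A.abs 1 ≠ 0 := fun h' => one_ne_zero ((A.eq_zero 1).mp h')
  exact (mul_left_cancel₀ h0 (by rw [mul_one]; exact h)).symm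

theorem abs_neg_one : A.abs (-1) = 1 := by
  have h := A.map_mul (-1) (-1)
  rw [neg_mul_neg, one_mul, A.abs_one] at h
  rcases mul_self_eq_one_iff.mp h.symm with h1 | h1
  · exact h1
  · linarith [A.nonneg (-1)]

end NAAbs

namespace NANorm

variable {F : Type*} [Field F] {A : NAAbs F} {V : Type*} [AddCommGroup V] [Module F V]
  (ν : NANorm A V)

theorem nu_neg (v : V) : ν.nu (-v) = ν.nu v := by
  simpa [A.abs_neg_one] using ν.smul_eq (-1) v

theorem nu_sub_of_lt {v w : V} (h : ν.nu w < ν.nu v) : ν.nu (v - w) = ν.nu v := by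
  have hle : ν.nu (v - w) ≤ ν.nu v := by
    simpa [sub_eq_add_neg, ν.nu_neg, max_eq_left h.le] using ν.ultra v (-w)
  have hge : ν.nu v ≤ max (ν.nu (v - w)) (ν.nu w) := by
    simpa using ν.ultra (v - w) w
  exact le_antisymm hle ((le_max_iff.mp hge).resolve_right h.not_ge)

section Lattice

variable {E : Type*} [AddCommGroup E] (φ : ℝ → E) {Y : AddSubgroup V} {w : V}

theorem indicator_sub_indicator_eq [DecidableEq V] :
    (Y : Set V).indicator (fun v => φ (ν.nu (v - w))) -
        {v | v ∈ Y ∧ v ≠ 0}.indicator (fun v => φ (ν.nu v)) =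
      Pi.single 0 (φ (ν.nu w)) +
        {v | v ∈ Y ∧ v ≠ 0 ∧ ν.nu v ≤ ν.nu w}.indicator
          (fun v => φ (ν.nu (v - w)) - φ (ν.nu v)) := by
  ext v
  by_cases hv0 : v = 0
  · subst hv0
    simp [Set.indicator, ν.nu_neg]
  by_cases hvY : v ∈ Y
  · by_cases hvw : ν.nu v ≤ ν.nu w
    · simp [Set.indicator, hv0, hvY, hvw]
    · simp [Set.indicator, hv0, hvY, hvw, ν.nu_sub_of_lt (not_le.mp hvw)]
  · simp [Set.indicator, hv0, hvY]

variable [TopologicalSpace E] [IsTopologicalAddGroup E]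
  (hT : {v | v ∈ Y ∧ v ≠ 0 ∧ ν.nu v ≤ ν.nu w}.Finite)

include hT in
theorem summable_indicator_sub_indicator [DecidableEq V] :
    Summable ((Y : Set V).indicator (fun v => φ (ν.nu (v - w))) -
        {v | v ∈ Y ∧ v ≠ 0}.indicator (fun v => φ (ν.nu v))) := by
  rw [indicator_sub_indicator_eq]
  exact (hasSum_pi_single _ _).summable.add (summable_subtype_iff_indicator.mp (hT.summable _))

variable (hg : Summable (fun v : {v // v ∈ Y ∧ v ≠ 0} => φ (ν.nu v.1)))
include hT hg

theorem summable_nu_sub : Summable (fun v : Y => φ (ν.nu (v.1 - w))) := by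
  classical
  have hg' : Summable ({v | v ∈ Y ∧ v ≠ 0}.indicator (fun v => φ (ν.nu v))) :=
    summable_subtype_iff_indicator.mp hg
  refine (summable_subtype_iff_indicator (f := fun v => φ (ν.nu (v - w)))).mpr ?_
  simpa using hg'.add (ν.summable_indicator_sub_indicator φ hT)

theorem tsum_nu_sub_sub_tsum_nu [T2Space E] :
    ∑' v : Y, φ (ν.nu (v.1 - w)) - ∑' v : {v // v ∈ Y ∧ v ≠ 0}, φ (ν.nu v.1) =
      φ (ν.nu w) + ∑' v : {v // v ∈ Y ∧ v ≠ 0 ∧ ν.nu v ≤ ν.nu w},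
        (φ (ν.nu (v.1 - w)) - φ (ν.nu v.1)) := by
  classical
  have hf : Summable ((Y : Set V).indicator (fun v => φ (ν.nu (v - w)))) :=
    summable_subtype_iff_indicator.mp (ν.summable_nu_sub φ hT hg)
  have hg' : Summable ({v | v ∈ Y ∧ v ≠ 0}.indicator (fun v => φ (ν.nu v))) :=
    summable_subtype_iff_indicator.mp hg
  calc ∑' v : Y, φ (ν.nu (v.1 - w)) - ∑' v : {v // v ∈ Y ∧ v ≠ 0}, φ (ν.nu v.1)
      = ∑' v, ((Y : Set V).indicator (fun v => φ (ν.nu (v - w))) -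
          {v | v ∈ Y ∧ v ≠ 0}.indicator (fun v => φ (ν.nu v))) v := by
        rw [Pi.sub_def, hf.tsum_sub hg']
        exact congrArg₂ _ (tsum_subtype (Y : Set V) fun v => φ (ν.nu (v - w)))
          (tsum_subtype {v | v ∈ Y ∧ v ≠ 0} fun v => φ (ν.nu v))
    _ = φ (ν.nu w) + ∑' v : {v // v ∈ Y ∧ v ≠ 0 ∧ ν.nu v ≤ ν.nu w},
        (φ (ν.nu (v.1 - w)) - φ (ν.nu v.1)) := by
        rw [indicator_sub_indicator_eq, Pi.add_def,
          Summable.tsum_add (hasSum_pi_single _ _).summable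
            (summable_subtype_iff_indicator.mp (hT.summable _)), tsum_pi_single]
        exact congrArg _ (tsum_subtype {v | v ∈ Y ∧ v ≠ 0 ∧ ν.nu v ≤ ν.nu w}
          fun v => φ (ν.nu (v - w)) - φ (ν.nu v)).symm

end Lattice

end NANorm

theorem statement12_general {F : Type*} [Field F] (A : NAAbs F)
    (r : ℕ)
    (ν : NANorm A (Fin r → F)) (Y : AddSubgroup (Fin r → F))
    (NY IM : ℝ) (hNY : 0 < NY)
    (hfin : ∀ c : ℝ, {v : Fin r → F | v ∈ Y ∧ ν.nu v ≤ c}.Finite)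
    (w : Fin r → F)
    (s : ℂ)
    (hsum : Summable (fun lam : {v : Fin r → F // v ∈ Y ∧ v ≠ 0} =>
      ((IM : ℝ) : ℂ) ^ s / ((ν.nu lam.1 : ℝ) : ℂ) ^ ((r : ℂ) * s))) :
    Summable (fun lam : Y =>
      ((IM : ℝ) : ℂ) ^ s / ((ν.nu (lam.1 - w) : ℝ) : ℂ) ^ ((r : ℂ) * s)) ∧
    (((NY : ℝ) : ℂ) ^ (-s) *
        (((NY : ℝ) : ℂ) ^ s * (∑' lam : Y,
            ((IM : ℝ) : ℂ) ^ s / ((ν.nu (lam.1 - w) : ℝ) : ℂ) ^ ((r : ℂ) * s)) -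
          ((NY : ℝ) : ℂ) ^ s * ∑' lam : {v : Fin r → F // v ∈ Y ∧ v ≠ 0},
            ((IM : ℝ) : ℂ) ^ s / ((ν.nu lam.1 : ℝ) : ℂ) ^ ((r : ℂ) * s))
      = ((IM : ℝ) : ℂ) ^ s / ((ν.nu w : ℝ) : ℂ) ^ ((r : ℂ) * s) +
          ∑' lam : {v : Fin r → F // v ∈ Y ∧ v ≠ 0 ∧ ν.nu v ≤ ν.nu w},
            (((IM : ℝ) : ℂ) ^ s / ((ν.nu (lam.1 - w) : ℝ) : ℂ) ^ ((r : ℂ) * s) -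
              ((IM : ℝ) : ℂ) ^ s / ((ν.nu lam.1 : ℝ) : ℂ) ^ ((r : ℂ) * s))) ∧
    {v : Fin r → F | v ∈ Y ∧ v ≠ 0 ∧ ν.nu v ≤ ν.nu w}.Finite ∧
    (((IM : ℝ) : ℂ) ^ (0 : ℂ) / ((ν.nu w : ℝ) : ℂ) ^ ((r : ℂ) * (0 : ℂ)) +
        ∑' lam : {v : Fin r → F // v ∈ Y ∧ v ≠ 0 ∧ ν.nu v ≤ ν.nu w},
          (((IM : ℝ) : ℂ) ^ (0 : ℂ) / ((ν.nu (lam.1 - w) : ℝ) : ℂ) ^ ((r : ℂ) * (0 : ℂ)) -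
            ((IM : ℝ) : ℂ) ^ (0 : ℂ) / ((ν.nu lam.1 : ℝ) : ℂ) ^ ((r : ℂ) * (0 : ℂ)))
      = 1) := by
  have hNY0 : ((NY : ℝ) : ℂ) ≠ 0 := Complex.ofReal_ne_zero.mpr hNY.ne'
  have hT : {v : Fin r → F | v ∈ Y ∧ v ≠ 0 ∧ ν.nu v ≤ ν.nu w}.Finite :=
    (hfin (ν.nu w)).subset fun v hv => ⟨hv.1, hv.2.2⟩
  let φ : ℝ → ℂ := fun t => ((IM : ℝ) : ℂ) ^ s / ((t : ℝ) : ℂ) ^ ((r : ℂ) * s)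
  refine ⟨ν.summable_nu_sub φ hT hsum, ?_, hT, by simp⟩
  rw [← mul_sub, ← mul_assoc, ← Complex.cpow_add _ _ hNY0, neg_add_cancel, Complex.cpow_zero,
    one_mul]
  exact ν.tsum_nu_sub_sub_tsum_nu φ hT hsum

/-- For the Jacobi-type Eisenstein series
`𝔼^Y(z,w,s) = ‖Y‖^s ∑_{λ∈Y} im(z)^s/ν_z(λ−w)^{rs}` (with `NY = ‖Y‖_A`, `IM = im(z)`,
`w ∉ Y`): for `Re(s) > 1` the series converges absolutely, and
`‖Y‖^{-s}(𝔼^Y(z,w,s) − 𝔼^Y(z,s)) = im(z)^s/ν_z(w)^{rs}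
  + ∑_{0≠λ∈Y, ν(λ)≤ν(w)} (im^s/ν(λ−w)^{rs} − im^s/ν(λ)^{rs})`,
a finite sum; at `s = 0` the right-hand side equals `1`, giving the meromorphic
continuation with `𝔼^Y(z,w,0) = 0`. -/
theorem statement12 {F : Type*} [Field F] (A : NAAbs F)
    (r : ℕ) (hr : 0 < r)
    (ν : NANorm A (Fin r → F)) (Y : AddSubgroup (Fin r → F))
    (NY IM : ℝ) (hNY : 0 < NY) (hIM : 0 < IM)
    (hfin : ∀ c : ℝ, {v : Fin r → F | v ∈ Y ∧ ν.nu v ≤ c}.Finite)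
    (w : Fin r → F) (hw : w ∉ Y)
    (s : ℂ) (hs : 1 < s.re)
    (hsum : Summable (fun lam : {v : Fin r → F // v ∈ Y ∧ v ≠ 0} =>
      ((IM : ℝ) : ℂ) ^ s / ((ν.nu lam.1 : ℝ) : ℂ) ^ ((r : ℂ) * s))) :
    Summable (fun lam : Y =>
      ((IM : ℝ) : ℂ) ^ s / ((ν.nu (lam.1 - w) : ℝ) : ℂ) ^ ((r : ℂ) * s)) ∧
    (((NY : ℝ) : ℂ) ^ (-s) *
        (((NY : ℝ) : ℂ) ^ s * (∑' lam : Y,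
            ((IM : ℝ) : ℂ) ^ s / ((ν.nu (lam.1 - w) : ℝ) : ℂ) ^ ((r : ℂ) * s)) -
          ((NY : ℝ) : ℂ) ^ s * ∑' lam : {v : Fin r → F // v ∈ Y ∧ v ≠ 0},
            ((IM : ℝ) : ℂ) ^ s / ((ν.nu lam.1 : ℝ) : ℂ) ^ ((r : ℂ) * s))
      = ((IM : ℝ) : ℂ) ^ s / ((ν.nu w : ℝ) : ℂ) ^ ((r : ℂ) * s) +
          ∑' lam : {v : Fin r → F // v ∈ Y ∧ v ≠ 0 ∧ ν.nu v ≤ ν.nu w},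
            (((IM : ℝ) : ℂ) ^ s / ((ν.nu (lam.1 - w) : ℝ) : ℂ) ^ ((r : ℂ) * s) -
              ((IM : ℝ) : ℂ) ^ s / ((ν.nu lam.1 : ℝ) : ℂ) ^ ((r : ℂ) * s))) ∧
    {v : Fin r → F | v ∈ Y ∧ v ≠ 0 ∧ ν.nu v ≤ ν.nu w}.Finite ∧
    (((IM : ℝ) : ℂ) ^ (0 : ℂ) / ((ν.nu w : ℝ) : ℂ) ^ ((r : ℂ) * (0 : ℂ)) +
        ∑' lam : {v : Fin r → F // v ∈ Y ∧ v ≠ 0 ∧ ν.nu v ≤ ν.nu w},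
          (((IM : ℝ) : ℂ) ^ (0 : ℂ) / ((ν.nu (lam.1 - w) : ℝ) : ℂ) ^ ((r : ℂ) * (0 : ℂ)) -
            ((IM : ℝ) : ℂ) ^ (0 : ℂ) / ((ν.nu lam.1 : ℝ) : ℂ) ^ ((r : ℂ) * (0 : ℂ)))
      = 1) :=
  statement12_general A r ν Y NY IM hNY hfin w s hsum
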